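/- Partial fraction identity: for n ≥ 0 and 0 ≤ r ≤ n, ∑_{k=0}^{n} (−1)^k q^{k(k+1)/2 − rk} / ((q;q)_k (q;q)_{n−k} (1 − x q^k)) = x^r / (x;q)_{n+1}, as rational functions in x and q. -/

import Mathlib

/-!
Since `r ≤ n`, the polynomial `x ^ r` has degree below the number `n + 1` of nodes
`x = q⁻ᵏ` (`0 ≤ k ≤ n`), which are distinct because `q` is not a root of unity. Lagrange
interpolation at these nodes, written with the factors `1 - qʲ x` in place of `x - q⁻ʲ`, is the
partial fraction expansion of `x ^ r / (x;q)_{n+1}`; its coefficient at `q⁻ᵏ` is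
`q^{-rk} / ∏_{j ≠ k} (1 - q^{j-k})`, and that product is `(-1)ᵏ q^{-k(k+1)/2} (q;q)_k (q;q)_{n-k}`.
-/

/-- The q-Pochhammer symbol `(a;q)_n = ∏_{j=0}^{n-1} (1 - a q^j)`. -/
noncomputable def qPoch (a q : ℂ) (n : ℕ) : ℂ := ∏ j ∈ Finset.range n, (1 - a * q ^ j)

open Finset Polynomial

lemma pow_injective_of_pow_ne_one {M₀ : Type*} [MonoidWithZero M₀] [IsLeftCancelMulZero M₀]
    {q : M₀} (hq : q ≠ 0) (hq1 : ∀ j, 1 ≤ j → q ^ j ≠ 1) :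
    Function.Injective (fun j : ℕ => q ^ j) := by
  suffices ∀ i d, q ^ (i + d) = q ^ i → d = 0 by
    intro i j hij
    rcases le_total i j with hle | hle
    · obtain ⟨d, rfl⟩ := Nat.exists_eq_add_of_le hle
      simp [this i d hij.symm]
    · obtain ⟨d, rfl⟩ := Nat.exists_eq_add_of_le hle
      simp [this j d hij]
  intro i d h
  by_contra hd
  rw [pow_add, ← mul_one (q ^ i), mul_assoc, one_mul] at h
  exact hq1 d (Nat.one_le_iff_ne_zero.2 hd) (mul_left_cancel₀ (pow_ne_zero i hq) h)

namespace Lagrange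

variable {F : Type*} [Field F] {ι : Type*} [DecidableEq ι] {s : Finset ι} {a : ι → F}

theorem eval_eq_sum_mul_prod_one_sub_mul (ha : ∀ i ∈ s, a i ≠ 0) (hinj : Set.InjOn a s)
    {p : F[X]} (hp : p.degree < #s) (x : F) :
    p.eval x = ∑ k ∈ s, p.eval (a k)⁻¹ *
      ((∏ j ∈ s.erase k, (1 - x * a j)) / ∏ j ∈ s.erase k, (1 - a j / a k)) := by
  have hinv : Set.InjOn (fun i => (a i)⁻¹) s := fun i hi j hj h => hinj hi hj (inv_inj.mp h)
  conv_lhs => rw [eq_interpolate hinv hp, interpolate_apply, eval_finsetSum]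
  refine sum_congr rfl fun k hk => ?_
  rw [eval_mul, eval_C, Lagrange.basis, Polynomial.eval_prod, ← prod_div_distrib]
  congr 1
  refine Finset.prod_congr rfl fun j hj => ?_
  obtain ⟨hjk, hj⟩ := mem_erase.mp hj
  have hajk : a j ≠ a k := fun h => hjk (hinj hj hk h)
  simp only [basisDivisor, eval_mul, eval_C, eval_sub, eval_X]
  field_simp [ha j hj, ha k hk]
  ring

theorem div_prod_one_sub_mul_eq_sum (ha : ∀ i ∈ s, a i ≠ 0) (hinj : Set.InjOn a s)
    {p : F[X]} (hp : p.degree < #s) {x : F} (hx : ∀ i ∈ s, 1 - x * a i ≠ 0) :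
    p.eval x / ∏ i ∈ s, (1 - x * a i) =
      ∑ k ∈ s, p.eval (a k)⁻¹ / ((∏ j ∈ s.erase k, (1 - a j / a k)) * (1 - x * a k)) := by
  rw [eval_eq_sum_mul_prod_one_sub_mul ha hinj hp x, sum_div]
  refine sum_congr rfl fun k hk => ?_
  have hxk := hx k hk
  have hrest : ∏ j ∈ s.erase k, (1 - x * a j) ≠ 0 :=
    prod_ne_zero_iff.2 fun j hj => hx j (mem_of_mem_erase hj)
  rw [← mul_prod_erase s _ hk]
  generalize ∏ j ∈ s.erase k, (1 - x * a j) = E at hrest ⊢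
  field_simp

end Lagrange

lemma qPoch_succ (a q : ℂ) (n : ℕ) : qPoch a q (n + 1) = qPoch a q n * (1 - a * q ^ n) :=
  prod_range_succ _ n

lemma prod_range_one_sub_inv_pow_succ {q : ℂ} (hq : q ≠ 0) (k : ℕ) :
    ∏ i ∈ range k, (1 - (q ^ (i + 1))⁻¹) =
      (-1) ^ k * (q ^ (k * (k + 1) / 2))⁻¹ * qPoch q q k := by
  induction k with
  | zero => simp [qPoch]
  | succ k ih =>
    have hsum : (k + 1) * (k + 2) / 2 = k * (k + 1) / 2 + (k + 1) := by
      have : (k + 1) * (k + 2) = k * (k + 1) + 2 * (k + 1) := by ring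
      omega
    rw [prod_range_succ, ih, hsum, qPoch_succ, pow_add]
    field_simp
    ring

lemma prod_erase_one_sub_pow_div_pow {q : ℂ} (hq : q ≠ 0) {n k : ℕ} (hk : k ≤ n) :
    ∏ j ∈ (range (n + 1)).erase k, (1 - q ^ j / q ^ k) =
      (-1) ^ k * (q ^ (k * (k + 1) / 2))⁻¹ * qPoch q q k * qPoch q q (n - k) := by
  have hsplit : (range (n + 1)).erase k = range k ∪ Ico (k + 1) (n + 1) := by
    ext j; simp only [mem_erase, mem_range, mem_union, mem_Ico]; omega
  have hdisj : Disjoint (range k) (Ico (k + 1) (n + 1)) := by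
    simp only [disjoint_left, mem_range, mem_Ico]; omega
  have below : ∏ j ∈ range k, (1 - q ^ j / q ^ k) = ∏ i ∈ range k, (1 - (q ^ (i + 1))⁻¹) := by
    rw [← prod_range_reflect]
    refine Finset.prod_congr rfl fun i hi => ?_
    simp only [mem_range] at hi
    rw [show k - 1 - i = k - (i + 1) by omega]
    nth_rewrite 2 [← Nat.sub_add_cancel (show i + 1 ≤ k by omega)]
    rw [pow_add, div_mul_cancel_left₀ (pow_ne_zero _ hq)]
  have above : ∏ j ∈ Ico (k + 1) (n + 1), (1 - q ^ j / q ^ k) = qPoch q q (n - k) := by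
    rw [prod_Ico_eq_prod_range, show n + 1 - (k + 1) = n - k by omega, qPoch]
    refine Finset.prod_congr rfl fun i _ => ?_
    rw [show k + 1 + i = k + (i + 1) by omega, pow_add, mul_div_cancel_left₀ _ (pow_ne_zero _ hq),
      pow_succ']
  rw [hsplit, prod_union hdisj, below, above, prod_range_one_sub_inv_pow_succ hq, mul_assoc]

theorem stmt14 (n r : ℕ) (hr : r ≤ n) (x q : ℂ) (hq : q ≠ 0)
    (hq1 : ∀ j, 1 ≤ j → q ^ j ≠ 1)
    (hx : ∀ k ≤ n, 1 - x * q ^ k ≠ 0) :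
    ∑ k ∈ Finset.range (n + 1),
        (-1 : ℂ) ^ k * q ^ (((k * (k + 1) / 2 : ℕ) : ℤ) - (r : ℤ) * k) /
          (qPoch q q k * qPoch q q (n - k) * (1 - x * q ^ k))
      = x ^ r / qPoch x q (n + 1) := by
  have hdeg : (X ^ r : ℂ[X]).degree < #(range (n + 1)) := by
    rw [degree_X_pow, card_range]; exact_mod_cast Nat.lt_succ_of_le hr
  have hx' : ∀ j ∈ range (n + 1), 1 - x * q ^ j ≠ 0 := fun j hj =>
    hx j (Nat.lt_succ_iff.1 (mem_range.1 hj))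
  rw [qPoch, ← eval_X_pow (R := ℂ) (n := r) (x := x), Lagrange.div_prod_one_sub_mul_eq_sum
    (fun j _ => pow_ne_zero j hq) (pow_injective_of_pow_ne_one hq hq1).injOn hdeg hx']
  refine Finset.sum_congr rfl fun k hk => ?_
  rw [eval_X_pow, prod_erase_one_sub_pow_div_pow hq (Nat.lt_succ_iff.1 (mem_range.1 hk)),
    zpow_sub₀ hq, zpow_natCast, ← Nat.cast_mul, zpow_natCast, inv_pow, ← pow_mul, mul_comm k r]
  simp only [div_eq_mul_inv, mul_inv, inv_inv, ← inv_pow, inv_neg_one]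
  ring
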